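/- arXiv:1604.05390 — 5 statements merged into one kernel-verified Lean document; each statement's English description precedes it below -/
import Mathlib

section
/- Let $s>0$, $K\in\mathbb{R}$, and $b_0,b_1,b_2\in\mathbb{R}$ with $b_1^2-b_0b_2=1$ and $(b_0+s^2Kb_2)^2+4s^2K=36s^4$. Suppose the Sasaki–Einstein conditions hold: $Kb_0-s^2K^2b_2=18s^2b_0$, $Kb_1=9s^2b_1$, and $s^2Kb_2-b_0=18s^4b_2$. Then $K=9s^2$ and $b_0+s^2Kb_2=0$. -/
/-! Adding `K` times the third Sasaki–Einstein equation to the first leaves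
`18 s² (b₀ + s² K b₂) = 0`; once `b₀ + s² K b₂ = 0`, the nearly-hypo normalisation
reduces to `4 s² K = 36 s⁴`. -/

section

variable {F : Type*} [Field F] [CharZero F] {s K b₀ b₂ : F}

theorem add_sq_mul_mul_eq_zero_of_einstein (hs : s ≠ 0)
    (h₁ : K * b₀ - s ^ 2 * K ^ 2 * b₂ = 18 * s ^ 2 * b₀)
    (h₃ : s ^ 2 * K * b₂ - b₀ = 18 * s ^ 4 * b₂) :
    b₀ + s ^ 2 * K * b₂ = 0 := by
  have h : (18 * s ^ 2) * (b₀ + s ^ 2 * K * b₂) = 0 := by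
    linear_combination -h₁ - K * h₃
  exact (mul_eq_zero.mp h).resolve_left (mul_ne_zero (by norm_num) (pow_ne_zero 2 hs))

theorem eq_nine_mul_sq_of_add_sq_mul_mul_eq_zero (hs : s ≠ 0)
    (hnh : (b₀ + s ^ 2 * K * b₂) ^ 2 + 4 * s ^ 2 * K = 36 * s ^ 4)
    (h₀ : b₀ + s ^ 2 * K * b₂ = 0) :
    K = 9 * s ^ 2 := by
  have h : (4 * s ^ 2) * (K - 9 * s ^ 2) = 0 := by
    linear_combination hnh - (b₀ + s ^ 2 * K * b₂) * h₀
  exact sub_eq_zero.mp ((mul_eq_zero.mp h).resolve_left (mul_ne_zero (by norm_num) (pow_ne_zero 2 hs)))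

end

theorem stmt8_general (s K b0 b2 : ℝ) (hs : s > 0)
    (hnh : (b0 + s ^ 2 * K * b2) ^ 2 + 4 * s ^ 2 * K = 36 * s ^ 4)
    (h1 : K * b0 - s ^ 2 * K ^ 2 * b2 = 18 * s ^ 2 * b0)
    (h3 : s ^ 2 * K * b2 - b0 = 18 * s ^ 4 * b2) :
    K = 9 * s ^ 2 ∧ b0 + s ^ 2 * K * b2 = 0 := by
  have h₀ := add_sq_mul_mul_eq_zero_of_einstein hs.ne' h1 h3
  exact ⟨eq_nine_mul_sq_of_add_sq_mul_mul_eq_zero hs.ne' hnh h₀, h₀⟩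

theorem stmt8 (s K b0 b1 b2 : ℝ) (hs : s > 0)
    (hb : b1 ^ 2 - b0 * b2 = 1)
    (hnh : (b0 + s ^ 2 * K * b2) ^ 2 + 4 * s ^ 2 * K = 36 * s ^ 4)
    (h1 : K * b0 - s ^ 2 * K ^ 2 * b2 = 18 * s ^ 2 * b0)
    (h2 : K * b1 = 9 * s ^ 2 * b1)
    (h3 : s ^ 2 * K * b2 - b0 = 18 * s ^ 4 * b2) :
    K = 9 * s ^ 2 ∧ b0 + s ^ 2 * K * b2 = 0 :=
  stmt8_general s K b0 b2 hs hnh h1 h3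
end

section
/- Let $b_0,b_1,b_2,c_0,c_1,c_2\in\mathbb{R}$ satisfy the type-I constraints $b_1^2-b_0b_2=c_1^2-c_0c_2=1$ and $b_0c_2+b_2c_0-2b_1c_1=0$, together with $b_1c_0-b_0c_1=1$, $b_2c_1-b_1c_2=1$, $b_2c_0-b_0c_2=0$ (i.e. the induced metric matrix equals the identity). Then $b_0=-b_2=-c_1$, $b_1=c_0=-c_2$, and $b_0^2+b_1^2=1$. -/
/-! The constraints `hmix` and `hg13` together say `b0 c2 = b2 c0 = b1 c1`; with this, `b0 = -c1`
and `b1 = c0` are polynomial combinations of the hypotheses. The substitution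
`(b0, b1, b2, c0, c1, c2) ↦ (b2, -b1, b0, c2, -c1, c0)` preserves all constraints while exchanging
`hg11` and `hg33`, so the same argument yields `b2 = c1` and `b1 = -c2`. -/

theorem b0_eq_neg_c1_and_b1_eq_c0 {b0 b1 b2 c0 c1 c2 : ℝ}
    (hb : b1 ^ 2 - b0 * b2 = 1) (hc : c1 ^ 2 - c0 * c2 = 1)
    (hmix : b0 * c2 + b2 * c0 - 2 * b1 * c1 = 0)
    (hg11 : b1 * c0 - b0 * c1 = 1)
    (hg13 : b2 * c0 - b0 * c2 = 0) :
    b0 = -c1 ∧ b1 = c0 := by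
  have hb0c2 : b0 * c2 = b1 * c1 := by linarith
  have hb2c0 : b2 * c0 = b1 * c1 := by linarith
  constructor
  · linear_combination -c1 * hg11 - c0 * hb0c2 - b0 * hc
  · linear_combination -b1 * hg11 + b0 * hb2c0 + c0 * hb

theorem stmt12 (b0 b1 b2 c0 c1 c2 : ℝ)
    (hb : b1 ^ 2 - b0 * b2 = 1) (hc : c1 ^ 2 - c0 * c2 = 1)
    (hmix : b0 * c2 + b2 * c0 - 2 * b1 * c1 = 0)
    (hg11 : b1 * c0 - b0 * c1 = 1)
    (hg33 : b2 * c1 - b1 * c2 = 1)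
    (hg13 : b2 * c0 - b0 * c2 = 0) :
    b0 = -b2 ∧ b0 = -c1 ∧ b1 = c0 ∧ b1 = -c2 ∧ b0 ^ 2 + b1 ^ 2 = 1 := by
  obtain ⟨hb0, hb1⟩ := b0_eq_neg_c1_and_b1_eq_c0 hb hc hmix hg11 hg13
  obtain ⟨hb2, hc2⟩ := b0_eq_neg_c1_and_b1_eq_c0 (b0 := b2) (b1 := -b1) (b2 := b0)
    (c0 := c2) (c1 := -c1) (c2 := c0)
    (by linear_combination hb) (by linear_combination hc) (by linear_combination hmix)
    (by linear_combination hg33) (by linear_combination -hg13)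
  refine ⟨by linarith, hb0, hb1, by linarith, ?_⟩
  linear_combination hb + b0 * (hb0 + hb2)
end

section
/- Let $s,p\in\mathbb{R}$ with $s\neq 0$, $p\neq 0$, let $a_0,a_2,a_3,b_0,b_1,b_2\in\mathbb{R}$ with $a_2\neq 0$, and let $K=a_0/(a_2s^2)$. Assume $a_3^2-a_0a_2=a_3p$, $b_1^2-b_0b_2=a_3p$, $a_0b_2+a_2b_0=0$, and $(b_0-s^2Kb_2)^2+4s^2Kb_1^2=36s^4a_3p^3$. Then $a_0/a_2=9s^4p^2$, i.e. $K=9s^2p^2$. -/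
/-! With `k = a0 / a2 = s² K`, the relation `a0 b2 + a2 b0 = 0` says `b0 = -k b2`. Using
`b1² = a3 p + b0 b2`, the left side of the discriminant condition collapses to
`(b0 + k b2)² + 4 k a3 p = 4 k a3 p`, so `4 k a3 p = 36 s⁴ a3 p³` and `a3 p ≠ 0` gives
`k = 9 s⁴ p²`. -/

theorem sq_sub_mul_add_four_mul_mul_sq_eq {R : Type*} [CommRing R] {k b0 b1 b2 c : R}
    (hb : b1 ^ 2 - b0 * b2 = c) (hk : b0 + k * b2 = 0) :
    (b0 - k * b2) ^ 2 + 4 * k * b1 ^ 2 = 4 * k * c := by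
  linear_combination 4 * k * hb + (b0 + k * b2) * hk

theorem stmt14_general (s p a0 a2 a3 b0 b1 b2 : ℝ)
    (hs : s ≠ 0) (ha2 : a2 ≠ 0)
    (K : ℝ) (hK : K = a0 / (a2 * s ^ 2))
    (h2 : b1 ^ 2 - b0 * b2 = a3 * p)
    (h3 : a0 * b2 + a2 * b0 = 0)
    (h4 : (b0 - s ^ 2 * K * b2) ^ 2 + 4 * s ^ 2 * K * b1 ^ 2 = 36 * s ^ 4 * a3 * p ^ 3)
    (ha3p : a3 * p ≠ 0) :
    a0 / a2 = 9 * s ^ 4 * p ^ 2 ∧ K = 9 * s ^ 2 * p ^ 2 := by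
  have hsK : s ^ 2 * K = a0 / a2 := by
    rw [hK]
    field_simp
  have hb0 : b0 + a0 / a2 * b2 = 0 := by
    field_simp
    linear_combination h3
  rw [mul_assoc 4, hsK, sq_sub_mul_add_four_mul_mul_sq_eq h2 hb0] at h4
  have hk : a0 / a2 = 9 * s ^ 4 * p ^ 2 :=
    mul_right_cancel₀ (mul_ne_zero (four_ne_zero' ℝ) ha3p) (by linear_combination h4)
  refine ⟨hk, ?_⟩
  rw [hK, ← div_div, hk]
  field_simp

theorem stmt14 (s p a0 a2 a3 b0 b1 b2 : ℝ)
    (hs : s ≠ 0) (hp : p ≠ 0) (ha2 : a2 ≠ 0)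
    (K : ℝ) (hK : K = a0 / (a2 * s ^ 2))
    (h1 : a3 ^ 2 - a0 * a2 = a3 * p)
    (h2 : b1 ^ 2 - b0 * b2 = a3 * p)
    (h3 : a0 * b2 + a2 * b0 = 0)
    (h4 : (b0 - s ^ 2 * K * b2) ^ 2 + 4 * s ^ 2 * K * b1 ^ 2 = 36 * s ^ 4 * a3 * p ^ 3)
    (ha3p : a3 * p ≠ 0) :
    a0 / a2 = 9 * s ^ 4 * p ^ 2 ∧ K = 9 * s ^ 2 * p ^ 2 :=
  stmt14_general s p a0 a2 a3 b0 b1 b2 hs ha2 K hK h2 h3 h4 ha3p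
end

section
/- Under the double-hypo type-II hypotheses with $c_0=\tfrac{Kb_1}{3p}$, $c_1=-\tfrac{b_0}{3s^2p}$, $c_2=-\tfrac{b_1}{3s^2p}$ and $K=a_0/(a_2s^2)$, $a_0b_2+a_2b_0=0$, define $g_{11}=a_3(b_1c_0-b_0c_1)$, $g_{33}=a_3(b_2c_1-b_1c_2)$, $g_{13}=\tfrac12 a_3(b_2c_0-b_0c_2)$, $g_{23}=\tfrac12\big(b_1(a_0c_2-a_2c_0)+c_1(a_2b_0-a_0b_2)\big)$. Then, assuming $b_1^2-b_0b_2=a_3p$ and $a_3^2-a_0a_2=a_3p$: $g_{11}=\tfrac{a_0a_3^2}{3a_2s^2}$, $g_{33}=\tfrac{a_3^2}{3s^2}$, $g_{13}=0$, $g_{23}=-\tfrac{a_0a_3}{3s^2}$, and $g_{11}g_{33}-g_{13}^2-g_{23}^2=\tfrac{a_0a_3^3p}{9a_2s^4}$. -/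
theorem gram_det_eq_of_sq_sub_mul {s p a0 a2 a3 : ℝ} (hs : s ≠ 0) (ha2 : a2 ≠ 0)
    (h1 : a3 ^ 2 - a0 * a2 = a3 * p) :
    a0 * a3 ^ 2 / (3 * a2 * s ^ 2) * (a3 ^ 2 / (3 * s ^ 2)) - (a0 * a3 / (3 * s ^ 2)) ^ 2 =
      a0 * a3 ^ 3 * p / (9 * a2 * s ^ 4) := by
  field_simp
  linear_combination 9 * a0 * a3 ^ 2 * h1

theorem stmt16 (s p a0 a2 a3 b0 b1 b2 : ℝ)
    (hs : s ≠ 0) (hp : p ≠ 0) (ha2 : a2 ≠ 0)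
    (K : ℝ) (hK : K = a0 / (a2 * s ^ 2))
    (h3 : a0 * b2 + a2 * b0 = 0)
    (c0 c1 c2 : ℝ)
    (hc0 : c0 = K * b1 / (3 * p))
    (hc1 : c1 = -(b0 / (3 * s ^ 2 * p)))
    (hc2 : c2 = -(b1 / (3 * s ^ 2 * p)))
    (g11 g33 g13 g23 : ℝ)
    (hg11 : g11 = a3 * (b1 * c0 - b0 * c1))
    (hg33 : g33 = a3 * (b2 * c1 - b1 * c2))
    (hg13 : g13 = a3 * (b2 * c0 - b0 * c2) / 2)
    (hg23 : g23 = (b1 * (a0 * c2 - a2 * c0) + c1 * (a2 * b0 - a0 * b2)) / 2)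
    (h2 : b1 ^ 2 - b0 * b2 = a3 * p)
    (h1 : a3 ^ 2 - a0 * a2 = a3 * p) :
    g11 = a0 * a3 ^ 2 / (3 * a2 * s ^ 2) ∧
    g33 = a3 ^ 2 / (3 * s ^ 2) ∧
    g13 = 0 ∧
    g23 = -(a0 * a3 / (3 * s ^ 2)) ∧
    g11 * g33 - g13 ^ 2 - g23 ^ 2 = a0 * a3 ^ 3 * p / (9 * a2 * s ^ 4) := by
  subst hK hc0 hc1 hc2
  have e11 : g11 = a0 * a3 ^ 2 / (3 * a2 * s ^ 2) := by
    rw [hg11]; field_simp; linear_combination a3 * a0 * h2 + a3 * b0 * h3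
  have e33 : g33 = a3 ^ 2 / (3 * s ^ 2) := by
    rw [hg33]; field_simp; linear_combination a3 * h2
  have e13 : g13 = 0 := by
    rw [hg13]; field_simp; linear_combination a3 * b1 * h3
  have e23 : g23 = -(a0 * a3 / (3 * s ^ 2)) := by
    rw [hg23]; field_simp; linear_combination -2 * a0 * h2 - b0 * h3
  refine ⟨e11, e33, e13, e23, ?_⟩
  rw [e11, e33, e13, e23, neg_sq, zero_pow two_ne_zero, sub_zero]
  exact gram_det_eq_of_sq_sub_mul hs ha2 h1
end

section
/- Let $p>0$, $s>0$, and constants $a_4,b_0,c_0,b_4,c_4,b_5,c_5\in\mathbb{R}$. Define functions of $t$: $A_3=2pt+a_4$, $B_0=b_0$, $C_0=c_0$, $B_1=\tfrac{c_0}{2ps^2}t+b_4$, $C_1=-\tfrac{b_0}{2ps^2}t+c_4$, $B_2=-\tfrac{b_0}{4p^2s^4}t^2+\tfrac{c_4}{ps^2}t+b_5$, $C_2=-\tfrac{c_0}{4p^2s^4}t^2-\tfrac{b_4}{ps^2}t+c_5$. If $b_0^2+c_0^2=16p^4s^4$, $b_4c_0-b_0c_4=4p^2s^2a_4$, $b_4^2-b_0b_5=c_4^2-c_0c_5=a_4^2$,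 and $b_0c_5+b_5c_0-2b_4c_4=0$, then for all $t$: $B_1(t)^2-B_0(t)B_2(t)=A_3(t)^2$, $C_1(t)^2-C_0(t)C_2(t)=A_3(t)^2$, and $B_0(t)C_2(t)+B_2(t)C_0(t)-2B_1(t)C_1(t)=0$. -/
/-!
With `k = 1 / (2 p s²)` every coefficient of the solution is a polynomial in `k`, and each of the
three quantities is a polynomial in `t` whose coefficients are, up to powers of `k`, exactly the
left-hand sides of the constraints: `b₀² + c₀²` and `b₄c₀ - b₀c₄` give the `t²` and `t` terms of
`(2pt + a₄)²`, and the mixed quantity does not depend on `t` at all.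
-/

section FlatTypeI

variable {R : Type*} [CommRing R] (k q a b0 c0 b4 c4 b5 c5 t : R)

theorem flatB_discr_eq_sq (h1 : k ^ 2 * (b0 ^ 2 + c0 ^ 2) = q ^ 2)
    (h2 : k * (b4 * c0 - b0 * c4) = q * a) (h3 : b4 ^ 2 - b0 * b5 = a ^ 2) :
    (k * c0 * t + b4) ^ 2 - b0 * (-(k ^ 2 * b0) * t ^ 2 + 2 * k * c4 * t + b5) = (q * t + a) ^ 2 := by
  linear_combination t ^ 2 * h1 + 2 * t * h2 + h3

theorem flatC_discr_eq_sq (h1 : k ^ 2 * (b0 ^ 2 + c0 ^ 2) = q ^ 2)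
    (h2 : k * (b4 * c0 - b0 * c4) = q * a) (h4 : c4 ^ 2 - c0 * c5 = a ^ 2) :
    (-(k * b0) * t + c4) ^ 2 - c0 * (-(k ^ 2 * c0) * t ^ 2 - 2 * k * b4 * t + c5) =
      (q * t + a) ^ 2 := by
  linear_combination t ^ 2 * h1 + 2 * t * h2 + h4

theorem flat_mixed_eq :
    b0 * (-(k ^ 2 * c0) * t ^ 2 - 2 * k * b4 * t + c5) +
        (-(k ^ 2 * b0) * t ^ 2 + 2 * k * c4 * t + b5) * c0 -
        2 * (k * c0 * t + b4) * (-(k * b0) * t + c4) =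
      b0 * c5 + b5 * c0 - 2 * b4 * c4 := by
  ring

end FlatTypeI

theorem stmt18 (p s : ℝ) (hp : p > 0) (hs : s > 0)
    (a4 b0 c0 b4 c4 b5 c5 : ℝ)
    (A3 B0 C0 B1 C1 B2 C2 : ℝ → ℝ)
    (hA3 : ∀ t, A3 t = 2 * p * t + a4)
    (hB0 : ∀ t, B0 t = b0) (hC0 : ∀ t, C0 t = c0)
    (hB1 : ∀ t, B1 t = c0 / (2 * p * s ^ 2) * t + b4)
    (hC1 : ∀ t, C1 t = -(b0 / (2 * p * s ^ 2)) * t + c4)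
    (hB2 : ∀ t, B2 t = -(b0 / (4 * p ^ 2 * s ^ 4)) * t ^ 2 + c4 / (p * s ^ 2) * t + b5)
    (hC2 : ∀ t, C2 t = -(c0 / (4 * p ^ 2 * s ^ 4)) * t ^ 2 - b4 / (p * s ^ 2) * t + c5)
    (h1 : b0 ^ 2 + c0 ^ 2 = 16 * p ^ 4 * s ^ 4)
    (h2 : b4 * c0 - b0 * c4 = 4 * p ^ 2 * s ^ 2 * a4)
    (h3 : b4 ^ 2 - b0 * b5 = a4 ^ 2)
    (h4 : c4 ^ 2 - c0 * c5 = a4 ^ 2)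
    (h5 : b0 * c5 + b5 * c0 - 2 * b4 * c4 = 0) :
    ∀ t, B1 t ^ 2 - B0 t * B2 t = A3 t ^ 2 ∧
      C1 t ^ 2 - C0 t * C2 t = A3 t ^ 2 ∧
      B0 t * C2 t + B2 t * C0 t - 2 * B1 t * C1 t = 0 := by
  intro t
  set k : ℝ := (2 * p * s ^ 2)⁻¹
  have hk : k * (2 * p * s ^ 2) = 1 := inv_mul_cancel₀ (by positivity)
  have hk1 : k ^ 2 * (b0 ^ 2 + c0 ^ 2) = (2 * p) ^ 2 := by
    rw [h1]; linear_combination 4 * p ^ 2 * (k * (2 * p * s ^ 2) + 1) * hk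
  have hk2 : k * (b4 * c0 - b0 * c4) = 2 * p * a4 := by
    rw [h2]; linear_combination 2 * p * a4 * hk
  have hB1k : B1 t = k * c0 * t + b4 := by rw [hB1]; ring
  have hC1k : C1 t = -(k * b0) * t + c4 := by rw [hC1]; ring
  have hB2k : B2 t = -(k ^ 2 * b0) * t ^ 2 + 2 * k * c4 * t + b5 := by rw [hB2]; ring
  have hC2k : C2 t = -(k ^ 2 * c0) * t ^ 2 - 2 * k * b4 * t + c5 := by rw [hC2]; ring
  rw [hA3, hB0, hC0, hB1k, hC1k, hB2k, hC2k, flat_mixed_eq, h5]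
  exact ⟨flatB_discr_eq_sq k _ a4 b0 c0 b4 c4 b5 t hk1 hk2 h3,
    flatC_discr_eq_sq k _ a4 b0 c0 b4 c4 c5 t hk1 hk2 h4, rfl⟩
end
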